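/- arXiv:1403.5403 — 3 statements merged into one kernel-verified Lean document; each statement's English description precedes it below -/
import Mathlib

section
/- Let M ≥ 1 and equip ℝ^M with the Euclidean norm ‖·‖₂, and let K = {(y, ξ) ∈ ℝ^M × ℝ : ‖y‖₂ ≤ ξ} be the epigraph of the Euclidean norm, a nonempty closed convex subset of ℝ^M × ℝ. Then for every (s, ζ) ∈ ℝ^M × ℝ, the metric projection of (s, ζ) onto K is: (0, 0) if ‖s‖₂ ≤ −ζ; (s, ζ) if ‖s‖₂ ≤ ζ; and otherwise (β s, β ‖s‖₂) where β = (1/2)(1 + ζ/‖s‖₂), noting that in this last case ‖s‖₂ > 0 so β is well defined. -/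
open RealInnerProductSpace

private lemma expand_sq {E : Type*} [NormedAddCommGroup E] [InnerProductSpace ℝ E] (x p s : E) :
    ‖x - s‖ ^ 2 = ‖p - s‖ ^ 2 + ‖x - p‖ ^ 2 - 2 * ⟪x - p, s - p⟫ := by
  have h : x - s = (x - p) - (s - p) := by abel
  rw [h, norm_sub_sq_real, norm_sub_rev s p]
  ring

private lemma proj_char {M : ℕ} (s : EuclideanSpace ℝ (Fin M)) (ζ : ℝ)
    (K : Set (EuclideanSpace ℝ (Fin M) × ℝ))
    (p : EuclideanSpace ℝ (Fin M) × ℝ) (hmem : p ∈ K)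
    (hVI : ∀ u ∈ K, ⟪u.1 - p.1, s - p.1⟫ + (u.2 - p.2) * (ζ - p.2) ≤ 0) :
    ∀ q : EuclideanSpace ℝ (Fin M) × ℝ,
      (q ∈ K ∧ ∀ u ∈ K,
          ‖q.1 - s‖ ^ 2 + (q.2 - ζ) ^ 2 ≤ ‖u.1 - s‖ ^ 2 + (u.2 - ζ) ^ 2) ↔ q = p := by
  have key : ∀ u : EuclideanSpace ℝ (Fin M) × ℝ, u ∈ K →
      ‖p.1 - s‖ ^ 2 + (p.2 - ζ) ^ 2 + (‖u.1 - p.1‖ ^ 2 + (u.2 - p.2) ^ 2)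
        ≤ ‖u.1 - s‖ ^ 2 + (u.2 - ζ) ^ 2 := by
    intro u hu
    have h1 := expand_sq u.1 p.1 s
    have h2 := hVI u hu
    nlinarith [h1, h2]
  intro q
  constructor
  · rintro ⟨hqK, hqmin⟩
    have h1 := key q hqK
    have h2 := hqmin p hmem
    have hn1 : ‖q.1 - p.1‖ ^ 2 = 0 :=
      le_antisymm (by nlinarith [sq_nonneg (q.2 - p.2)]) (by positivity)
    have hn2 : (q.2 - p.2) ^ 2 = 0 :=
      le_antisymm (by nlinarith [sq_nonneg ‖q.1 - p.1‖]) (by positivity)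
    have e1 : q.1 = p.1 := by
      have := (pow_eq_zero_iff two_ne_zero).mp hn1
      rwa [norm_eq_zero, sub_eq_zero] at this
    have e2 : q.2 = p.2 := by
      have := (pow_eq_zero_iff two_ne_zero).mp hn2
      rwa [sub_eq_zero] at this
    exact Prod.ext e1 e2
  · rintro rfl
    refine ⟨hmem, fun u hu => ?_⟩
    have := key u hu
    nlinarith [sq_nonneg ‖u.1 - q.1‖, sq_nonneg (u.2 - q.2)]

/-- Closed form of the metric projection onto the epigraph
`K = {(y, ξ) : ‖y‖₂ ≤ ξ}` of the Euclidean norm on `ℝ^M`.  The projection of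
`(s, ζ)` is `(0,0)` if `‖s‖ ≤ -ζ`, `(s, ζ)` if `‖s‖ ≤ ζ`, and otherwise
`(β • s, β * ‖s‖)` with `β = (1/2)(1 + ζ/‖s‖)`.  The squared distance on the
product is the Hilbert one, `‖y - s‖² + (ξ - ζ)²`. -/
theorem stmt_1 (M : ℕ) (hM : 1 ≤ M) (s : EuclideanSpace ℝ (Fin M)) (ζ : ℝ)
    (K : Set (EuclideanSpace ℝ (Fin M) × ℝ))
    (hK : K = {p | ‖p.1‖ ≤ p.2}) :
    ∀ q : EuclideanSpace ℝ (Fin M) × ℝ,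
      (q ∈ K ∧ ∀ u ∈ K,
          ‖q.1 - s‖ ^ 2 + (q.2 - ζ) ^ 2 ≤ ‖u.1 - s‖ ^ 2 + (u.2 - ζ) ^ 2) ↔
        q = if ‖s‖ ≤ -ζ then ((0 : EuclideanSpace ℝ (Fin M)), (0 : ℝ))
            else if ‖s‖ ≤ ζ then (s, ζ)
            else ((1 / 2 * (1 + ζ / ‖s‖)) • s, 1 / 2 * (1 + ζ / ‖s‖) * ‖s‖) := by
  by_cases h1 : ‖s‖ ≤ -ζ
  · rw [if_pos h1]
    refine proj_char s ζ K (0, 0) ?_ ?_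
    · rw [hK]; simp
    · rintro ⟨y, ξ⟩ hu
      rw [hK] at hu
      simp only [Set.mem_setOf_eq] at hu
      simp only [sub_zero]
      nlinarith [real_inner_le_norm y s, norm_nonneg y, norm_nonneg s]
  · rw [if_neg h1]
    by_cases h2 : ‖s‖ ≤ ζ
    · rw [if_pos h2]
      refine proj_char s ζ K (s, ζ) ?_ ?_
      · rw [hK]; exact h2
      · rintro ⟨y, ξ⟩ hu
        simp
    · rw [if_neg h2]
      push_neg at h1 h2
      have ha : (0:ℝ) < ‖s‖ := by linarith
      have ha' : ‖s‖ ≠ 0 := ne_of_gt ha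
      set β : ℝ := 1 / 2 * (1 + ζ / ‖s‖) with hβ
      have hβpos : 0 < β := by
        rw [hβ]
        have : 0 < 1 + ζ / ‖s‖ := by
          have : -1 < ζ / ‖s‖ := by
            rw [lt_div_iff₀ ha]; linarith
          linarith
        linarith
      refine proj_char s ζ K (β • s, β * ‖s‖) ?_ ?_
      · rw [hK]
        simp only [Set.mem_setOf_eq, norm_smul, Real.norm_eq_abs,
          abs_of_pos hβpos, le_refl]
      · rintro ⟨y, ξ⟩ hu
        rw [hK] at hu
        simp only [Set.mem_setOf_eq] at hu
        have hss : s - β • s = (1 - β) • s := by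
          rw [sub_smul, one_smul]
        simp only
        rw [hss, real_inner_smul_right, inner_sub_left, real_inner_smul_left,
          real_inner_self_eq_norm_sq]
        have ht : ⟪y, s⟫ ≤ ξ * ‖s‖ :=
          le_trans (real_inner_le_norm y s) (mul_le_mul_of_nonneg_right hu ha.le)
        have hid : (1 - β) * (⟪y, s⟫ - β * ‖s‖ ^ 2) + (ξ - β * ‖s‖) * (ζ - β * ‖s‖)
            = (‖s‖ - ζ) / (2 * ‖s‖) * (⟪y, s⟫ - ξ * ‖s‖) := by
          rw [hβ]; field_simp; ring
        rw [hid]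
        apply mul_nonpos_of_nonneg_of_nonpos
        · apply div_nonneg <;> linarith
        · linarith
end

section
/- Let M ≥ 1, let ζ ∈ ℝ, and let ν¹ ≤ ν² ≤ … ≤ ν^M be real numbers, with the conventions ν⁰ = −∞ and ν^{M+1} = +∞ (and the convention that the sum ∑_{k=M+1}^{M} ν^k equals 0). Then there exists a unique integer k̄ ∈ {1, …, M+1} such that ν^{k̄−1} < (ζ + ∑_{k=k̄}^{M} ν^k)/(M − k̄ + 2) ≤ ν^{k̄}. -/
private noncomputable def stmtF (M : ℕ) (ζ : ℝ) (ν : ℕ → ℝ) (j : ℕ) : ℝ :=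
  (ζ + ∑ k ∈ Finset.Icc j M, ν k) / ((M : ℝ) - j + 2)

private theorem stmt_3_aux (M : ℕ) (hM : 1 ≤ M) (ζ : ℝ) (ν : ℕ → ℝ)
    (hmono : ∀ k, 1 ≤ k → k < M → ν k ≤ ν (k + 1)) :
    ∃! kb : ℕ, kb ∈ Finset.Icc 1 (M + 1) ∧
      (1 < kb → ν (kb - 1) < stmtF M ζ ν kb) ∧
      (kb ≤ M → stmtF M ζ ν kb ≤ ν kb) := by
  classical
  have hsum : ∀ j, j ≤ M → ∑ k ∈ Finset.Icc j M, ν k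
      = ν j + ∑ k ∈ Finset.Icc (j+1) M, ν k := by
    intro j hj
    rw [Finset.Icc_eq_cons_Ioc hj, Finset.sum_cons, ← Finset.Icc_add_one_left_eq_Ioc]
  have key : ∀ j, 1 ≤ j → j ≤ M →
      (stmtF M ζ ν j ≤ ν j ↔ stmtF M ζ ν (j+1) ≤ ν j) := by
    intro j h1 hjM
    have hjr : (j:ℝ) ≤ M := by exact_mod_cast hjM
    have hd1 : (0:ℝ) < (M:ℝ) - j + 2 := by linarith
    have hd2 : (0:ℝ) < (M:ℝ) - (↑(j+1)) + 2 := by push_cast; linarith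
    unfold stmtF
    rw [div_le_iff₀ hd1, div_le_iff₀ hd2, hsum j hjM]
    push_cast
    constructor <;> intro h <;> nlinarith [h]
  have mono' : ∀ a b, 1 ≤ a → a ≤ b → b ≤ M → ν a ≤ ν b := by
    intro a b
    induction b with
    | zero => intro h1 hab _; omega
    | succ n ih =>
      intro h1 hab hbM
      rcases Nat.lt_or_ge n a with h | h
      · have ha : a = n + 1 := by omega
        simp [ha]
      · exact le_trans (ih h1 h (by omega)) (hmono n (by omega) (by omega))
  have chain : ∀ j, 1 ≤ j → j ≤ M → stmtF M ζ ν j ≤ ν j →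
      ∀ m, j + 1 ≤ m → m ≤ M + 1 → stmtF M ζ ν m ≤ ν (m - 1) := by
    intro j h1 hjM hfj m hm
    induction m, hm using Nat.le_induction with
    | base =>
      intro _
      simpa using (key j h1 hjM).mp hfj
    | succ n hn ih =>
      intro hle
      have hnM : n ≤ M := by omega
      have hfn := ih (by omega)
      have hν : ν (n - 1) ≤ ν n := mono' (n-1) n (by omega) (by omega) hnM
      have h3 : stmtF M ζ ν n ≤ ν n := le_trans hfn hν
      have h4 := (key n (by omega) hnM).mp h3
      simpa using h4
  have hex : ∃ j, 1 ≤ j ∧ j ≤ M + 1 ∧ (j ≤ M → stmtF M ζ ν j ≤ ν j) :=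
    ⟨M + 1, by omega, le_rfl, fun h => absurd h (by omega)⟩
  obtain ⟨hkb1, hkbM, hkbF⟩ := Nat.find_spec hex
  refine ⟨Nat.find hex, ⟨Finset.mem_Icc.mpr ⟨hkb1, hkbM⟩, ?_, fun h => hkbF h⟩, ?_⟩
  · intro h1kb
    have hlt : Nat.find hex - 1 < Nat.find hex := by omega
    have hnot := Nat.find_min hex hlt
    push_neg at hnot
    have h1' : 1 ≤ Nat.find hex - 1 := by omega
    have h2' : Nat.find hex - 1 ≤ M + 1 := by omega
    obtain ⟨hm, hlt'⟩ := hnot h1' h2'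
    have hiff := key (Nat.find hex - 1) h1' hm
    have hcontr : ¬ stmtF M ζ ν (Nat.find hex - 1) ≤ ν (Nat.find hex - 1) :=
      not_le.mpr hlt'
    have hne : ¬ stmtF M ζ ν (Nat.find hex - 1 + 1) ≤ ν (Nat.find hex - 1) :=
      fun h => hcontr (hiff.mpr h)
    have heq : Nat.find hex - 1 + 1 = Nat.find hex := by omega
    rw [heq] at hne
    exact not_le.mp hne
  · rintro y ⟨hymem, hy1, hy2⟩
    rw [Finset.mem_Icc] at hymem
    by_contra hne
    rcases Nat.lt_or_ge y (Nat.find hex) with h | h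
    · have hyM : y ≤ M := by omega
      exact absurd ⟨hymem.1, hymem.2, fun _ => hy2 hyM⟩ (Nat.find_min hex h)
    · have h' : Nat.find hex < y := by omega
      have hkM : Nat.find hex ≤ M := by omega
      have hFk : stmtF M ζ ν (Nat.find hex) ≤ ν (Nat.find hex) := hkbF hkM
      have hch := chain (Nat.find hex) hkb1 hkM hFk y (by omega) hymem.2
      have hylt := hy1 (by omega)
      linarith

/-- Existence and uniqueness of the threshold index `k̄ ∈ {1, …, M+1}` such
that `ν^{k̄-1} < (ζ + ∑_{k=k̄}^{M} ν^k)/(M - k̄ + 2) ≤ ν^{k̄}` for a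
nondecreasing finite sequence `ν¹ ≤ … ≤ ν^M`, with the conventions
`ν⁰ = -∞` and `ν^{M+1} = +∞` (encoded by making the corresponding inequality
vacuous) and the empty-sum convention. -/
theorem stmt_3 (M : ℕ) (hM : 1 ≤ M) (ζ : ℝ) (ν : ℕ → ℝ)
    (hmono : ∀ k, 1 ≤ k → k < M → ν k ≤ ν (k + 1)) :
    ∃! kb : ℕ, kb ∈ Finset.Icc 1 (M + 1) ∧
      (1 < kb →
        ν (kb - 1) < (ζ + ∑ k ∈ Finset.Icc kb M, ν k) / ((M : ℝ) - kb + 2)) ∧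
      (kb ≤ M →
        (ζ + ∑ k ∈ Finset.Icc kb M, ν k) / ((M : ℝ) - kb + 2) ≤ ν kb) := by
  have h := stmt_3_aux M hM ζ ν hmono
  simpa only [stmtF] using h
end

section
/- Let M ≥ 1 and let K = {(y, ξ) ∈ ℝ^M × ℝ : max_{1≤m≤M} |y^m| ≤ ξ} be the epigraph of the ℓ∞ norm on ℝ^M. Let s = (s^1, …, s^M) ∈ ℝ^M have nonnegative entries and let ζ ∈ ℝ. Let ν¹ ≤ … ≤ ν^M be the nondecreasing rearrangement of (s^1, …, s^M), with conventions ν⁰ = −∞ and ν^{M+1} = +∞, and let k̄ ∈ {1, …, M+1} be the unique integer such that ν^{k̄−1} < (ζ + ∑_{k=k̄}^{M} ν^k)/(M − k̄ + 2) ≤ ν^{k̄}. Set θ = max{ζ + ∑_{k=k̄}^{M} ν^k, 0}/(M − k̄ + 2) and t^m = min{s^m, θ} for each m ∈ {1, …, M}. Then the metric projection of (s, ζ) onto K (with respect to the Euclidean norm on ℝ^M × ℝ) equals (t, θ). -/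
set_option maxHeartbeats 1000000

/-- Closed form of the metric projection of a point `(s, ζ)` with `s ≥ 0`
onto the epigraph `K = {(y, ξ) : max_m |y^m| ≤ ξ}` of the `ℓ∞` norm on `ℝ^M`:
with `ν` a nondecreasing rearrangement of `s`, `k̄` the threshold index,
`θ = max{ζ + ∑_{k=k̄}^{M} ν^k, 0}/(M - k̄ + 2)` and `t^m = min{s^m, θ}`, the
projection (for the Euclidean norm on `ℝ^M × ℝ`) equals `(t, θ)`. -/
theorem stmt_4 (M : ℕ) (hM : 1 ≤ M) (s : Fin M → ℝ) (hs : ∀ m, 0 ≤ s m) (ζ : ℝ)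
    (ν : ℕ → ℝ) (σ : Equiv.Perm (Fin M))
    (hrearr : ∀ m : Fin M, ν (m.1 + 1) = s (σ m))
    (hmono : ∀ k, 1 ≤ k → k < M → ν k ≤ ν (k + 1))
    (kb : ℕ) (hkb : kb ∈ Finset.Icc 1 (M + 1))
    (hlow : 1 < kb →
      ν (kb - 1) < (ζ + ∑ k ∈ Finset.Icc kb M, ν k) / ((M : ℝ) - kb + 2))
    (hupp : kb ≤ M →
      (ζ + ∑ k ∈ Finset.Icc kb M, ν k) / ((M : ℝ) - kb + 2) ≤ ν kb)
    (θ : ℝ) (hθ : θ = max (ζ + ∑ k ∈ Finset.Icc kb M, ν k) 0 / ((M : ℝ) - kb + 2))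
    (t : Fin M → ℝ) (ht : ∀ m, t m = min (s m) θ) :
    ∀ q : (Fin M → ℝ) × ℝ,
      ((∀ m, |q.1 m| ≤ q.2) ∧
        ∀ (y : Fin M → ℝ) (ξ : ℝ), (∀ m, |y m| ≤ ξ) →
          (∑ m, (q.1 m - s m) ^ 2) + (q.2 - ζ) ^ 2 ≤
            (∑ m, (y m - s m) ^ 2) + (ξ - ζ) ^ 2) ↔
      q = (t, θ) := by
  obtain ⟨hkb1, hkb2⟩ := Finset.mem_Icc.mp hkb
  set S : ℝ := ∑ k ∈ Finset.Icc kb M, ν k with hS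
  set D : ℝ := (M : ℝ) - kb + 2 with hDdef
  have hkbR : (kb : ℝ) ≤ (M : ℝ) + 1 := by exact_mod_cast hkb2
  have hD : 0 < D := by rw [hDdef]; linarith
  have hθ0 : 0 ≤ θ := by
    rw [hθ]; exact div_nonneg (le_max_right _ _) hD.le
  -- nonnegativity of ν on [1, M]
  have hν0 : ∀ k, 1 ≤ k → k ≤ M → 0 ≤ ν k := by
    intro k h1 h2
    have h3 : ν (k - 1 + 1) = s (σ ⟨k - 1, by omega⟩) := hrearr ⟨k - 1, by omega⟩
    rw [show k - 1 + 1 = k from by omega] at h3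
    rw [h3]; exact hs _
  -- monotonicity of ν on [1, M]
  have hmono' : ∀ k l, 1 ≤ k → k ≤ l → l ≤ M → ν k ≤ ν l := by
    intro k l hk hkl hlM
    induction l with
    | zero => omega
    | succ n ih =>
      rcases Nat.eq_or_lt_of_le hkl with h | h
      · rw [h]
      · exact le_trans (ih (by omega) (by omega)) (hmono n (by omega) (by omega))
  have hθ'le : (ζ + S) / D ≤ θ := by
    rw [hθ]
    gcongr
    exact le_max_left _ _
  -- ν k ≤ θ for k < kb
  have hlt : ∀ k, 1 ≤ k → k < kb → ν k ≤ θ := by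
    intro k h1 h2
    have h3 := hlow (by omega)
    have h4 : ν k ≤ ν (kb - 1) := hmono' k (kb - 1) h1 (by omega) (by omega)
    linarith
  -- θ ≤ ν k for kb ≤ k ≤ M
  have hge : ∀ k, kb ≤ k → k ≤ M → θ ≤ ν k := by
    intro k h1 h2
    have h3 := hupp (le_trans h1 h2)
    have h4 : ν kb ≤ ν k := hmono' kb k (by omega) h1 h2
    have h5 : 0 ≤ ν k := hν0 k (by omega) h2
    rw [hθ]
    rcases le_total (ζ + S) 0 with h | h
    · rw [max_eq_right h]; simpa using h5
    · rw [max_eq_left h]; linarith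
  -- rearrangement of sums
  have hreL : ∀ f : ℝ → ℝ, ∑ m, f (s m) = ∑ k ∈ Finset.Icc 1 M, f (ν k) := by
    intro f
    rw [← Equiv.sum_comp σ (fun m => f (s m))]
    simp only [← hrearr]
    rw [Fin.sum_univ_eq_sum_range (fun i => f (ν (i + 1)))]
    rw [show Finset.Icc 1 M = Finset.Ico 1 (M + 1) from by rw [Finset.Ico_add_one_right_eq_Icc]]
    rw [Finset.sum_Ico_eq_sum_range]
    simp [add_comm]
  -- key sum computation
  have hsum : (∑ m, (s m - t m)) = S - ((M : ℝ) - kb + 1) * θ := by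
    have hst : ∀ m, s m - t m = max (s m - θ) 0 := by
      intro m; rw [ht]
      rcases le_total (s m) θ with h | h
      · rw [min_eq_left h, max_eq_right (by linarith), sub_self]
      · rw [min_eq_right h, max_eq_left (by linarith)]
    calc (∑ m, (s m - t m)) = ∑ m, max (s m - θ) 0 := by
          exact Finset.sum_congr rfl fun m _ => hst m
      _ = ∑ k ∈ Finset.Icc 1 M, max (ν k - θ) 0 := hreL (fun x => max (x - θ) 0)
      _ = ∑ k ∈ Finset.Icc 1 M, (if kb ≤ k then ν k - θ else 0) := by
          apply Finset.sum_congr rfl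
          intro k hk
          obtain ⟨h1, h2⟩ := Finset.mem_Icc.mp hk
          by_cases h : kb ≤ k
          · rw [if_pos h, max_eq_left (by linarith [hge k h h2])]
          · rw [if_neg h, max_eq_right (by linarith [hlt k h1 (by omega)])]
      _ = ∑ k ∈ Finset.Icc kb M, (ν k - θ) := by
          rw [← Finset.sum_filter]
          apply Finset.sum_congr _ (fun _ _ => rfl)
          ext k
          simp only [Finset.mem_filter, Finset.mem_Icc]
          omega
      _ = S - ((M : ℝ) - kb + 1) * θ := by
          rw [Finset.sum_sub_distrib, Finset.sum_const, Nat.card_Icc, nsmul_eq_mul]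
          have : ((M + 1 - kb : ℕ) : ℝ) = (M : ℝ) - kb + 1 := by
            have := hkb2; push_cast [Nat.cast_sub (by omega : kb ≤ M + 1)]; ring
          rw [this]
  have hDθ : D * θ = max (ζ + S) 0 := by
    rw [hθ, mul_div_cancel₀ _ (ne_of_gt hD)]
  -- feasibility of (t, θ)
  have htfeas : ∀ m, |t m| ≤ θ := by
    intro m
    rw [abs_le, ht]
    constructor
    · have := hs m; have : (0:ℝ) ≤ min (s m) θ := le_min (hs m) hθ0
      linarith
    · exact min_le_right _ _
  -- the variational inequality
  have key : ∀ (y : Fin M → ℝ) (ξ : ℝ), (∀ m, |y m| ≤ ξ) →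
      (∑ m, (s m - t m) * (y m - t m)) + (ζ - θ) * (ξ - θ) ≤ 0 := by
    intro y ξ hy
    have hξ0 : 0 ≤ ξ := le_trans (abs_nonneg _) (hy ⟨0, hM⟩)
    have h1 : ∀ m ∈ Finset.univ, (s m - t m) * (y m - t m) ≤ (s m - t m) * (ξ - θ) := by
      intro m _
      rcases le_total (s m) θ with h | h
      · have : s m - t m = 0 := by rw [ht, min_eq_left h]; ring
        rw [this]; simp
      · have hyt : y m - t m ≤ ξ - θ := by
          have := (abs_le.mp (hy m)).2
          rw [ht, min_eq_right h]; linarith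
        have hst : 0 ≤ s m - t m := by rw [ht, min_eq_right h]; linarith
        exact mul_le_mul_of_nonneg_left hyt hst
    have h2 : (∑ m, (s m - t m) * (y m - t m)) ≤ (∑ m, (s m - t m)) * (ξ - θ) := by
      rw [Finset.sum_mul]
      exact Finset.sum_le_sum h1
    have hA : (∑ m, (s m - t m)) + (ζ - θ) = (ζ + S) - max (ζ + S) 0 := by
      rw [hsum, ← hDθ, hDdef]; ring
    rcases le_total (ζ + S) 0 with h | h
    · have hθz : θ = 0 := by
        rw [hθ, max_eq_right h, zero_div]
      have hAle : (∑ m, (s m - t m)) + (ζ - θ) ≤ 0 := by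
        rw [hA, max_eq_right h]; linarith
      nlinarith [mul_nonpos_of_nonpos_of_nonneg hAle (by rw [hθz]; linarith : (0:ℝ) ≤ ξ - θ)]
    · have hA0 : (∑ m, (s m - t m)) + (ζ - θ) = 0 := by
        rw [hA, max_eq_left h]; ring
      nlinarith
  -- quadratic expansion identity
  have hid : ∀ (y : Fin M → ℝ) (ξ : ℝ),
      (∑ m, (y m - s m) ^ 2) + (ξ - ζ) ^ 2
      = ((∑ m, (t m - s m) ^ 2) + (θ - ζ) ^ 2)
        + ((∑ m, (y m - t m) ^ 2) + (ξ - θ) ^ 2)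
        + (-2) * ((∑ m, (s m - t m) * (y m - t m)) + (ζ - θ) * (ξ - θ)) := by
    intro y ξ
    have hpt : ∀ m : Fin M, (y m - s m) ^ 2
        = (t m - s m) ^ 2 + (y m - t m) ^ 2 + (-2) * ((s m - t m) * (y m - t m)) :=
      fun m => by ring
    rw [Finset.sum_congr rfl (fun m _ => hpt m), Finset.sum_add_distrib,
      Finset.sum_add_distrib, ← Finset.mul_sum]
    ring
  have hmin : ∀ (y : Fin M → ℝ) (ξ : ℝ), (∀ m, |y m| ≤ ξ) →
      (∑ m, (t m - s m) ^ 2) + (θ - ζ) ^ 2 ≤ (∑ m, (y m - s m) ^ 2) + (ξ - ζ) ^ 2 := by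
    intro y ξ hy
    have h2 := key y ξ hy
    have h3 := hid y ξ
    have hsq : (0:ℝ) ≤ ∑ m, (y m - t m) ^ 2 :=
      Finset.sum_nonneg fun m _ => sq_nonneg _
    nlinarith [sq_nonneg (ξ - θ)]
  intro q
  constructor
  · rintro ⟨hqfeas, hqmin⟩
    have h1 := hqmin t θ htfeas
    have h2 := key q.1 q.2 hqfeas
    have h3 := hid q.1 q.2
    have hz : (∑ m, (q.1 m - t m) ^ 2) + (q.2 - θ) ^ 2 ≤ 0 := by linarith
    have hsq : (0:ℝ) ≤ ∑ m, (q.1 m - t m) ^ 2 :=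
      Finset.sum_nonneg fun m _ => sq_nonneg _
    have h7 : (q.2 - θ) ^ 2 = 0 := by linarith [sq_nonneg (q.2 - θ)]
    have hq2 : q.2 = θ := by
      have := pow_eq_zero_iff (n := 2) (by norm_num) |>.mp h7
      linarith
    have hsz : (∑ m, (q.1 m - t m) ^ 2) = 0 := by linarith [sq_nonneg (q.2 - θ)]
    have hq1 : q.1 = t := by
      funext m
      have h5 := (Finset.sum_eq_zero_iff_of_nonneg
        (fun m _ => sq_nonneg (q.1 m - t m))).mp hsz m (Finset.mem_univ m)
      have h6 : q.1 m - t m = 0 := pow_eq_zero_iff (by norm_num) |>.mp h5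
      linarith
    exact Prod.ext_iff.mpr ⟨hq1, hq2⟩
  · rintro rfl
    refine ⟨htfeas, ?_⟩
    intro y ξ hy
    exact hmin y ξ hy
end
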